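/- arXiv:math/0701232 — 2 statements merged into one kernel-verified Lean document; each statement's English description precedes it below -/
import Mathlib

section
/- A positive integer n has a balanced length spectrum (i.e., lspec(n) has equally many even and odd elements) if and only if n = 2^α · k for some integer α ≥ 0 and odd positive integer k with q(k) > 2^(α+1). -/
/-- The length spectrum of `n`: the set of lengths `l` of decompositions of `n`,
i.e. sequences `a, a+1, ..., a+(l-1)` of `l ≥ 1` consecutive positive integers summing to `n`. -/
def lspec (n : ℕ) : Set ℕ :=
  {l | 0 < l ∧ ∃ a : ℕ, 0 < a ∧ ∑ i ∈ Finset.range l, (a + i) = n}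

/-- `A₀`: the even elements of `A`. -/
def evens (A : Set ℕ) : Set ℕ := {x ∈ A | Even x}

/-- `A₁`: the odd elements of `A`. -/
def odds (A : Set ℕ) : Set ℕ := {x ∈ A | Odd x}

/-- The spectral class of `n`: positive integers with the same length spectrum as `n`. -/
def specClass (n : ℕ) : Set ℕ := {m | 0 < m ∧ lspec m = lspec n}

/-- A set is balanced if it has equally many even and odd elements. -/
def balancedSet (S : Set ℕ) : Prop := (evens S).encard = (odds S).encard

/-- A set is unmixed if it has no even elements. -/
def unmixedSet (S : Set ℕ) : Prop := evens S = ∅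

/-- A set is lopsided if it is neither balanced nor unmixed. -/
def lopsidedSet (S : Set ℕ) : Prop := ¬ balancedSet S ∧ ¬ unmixedSet S

/-- The set of ratios `m'/m` over pairs of complementary factors `m ≤ m'` of `k`;
`q(k)` is the least element of this set. -/
def qSet (k : ℕ) : Set ℚ :=
  {r | ∃ m m' : ℕ, 0 < m ∧ m ≤ m' ∧ m * m' = k ∧ r = (m' : ℚ) / (m : ℚ)}

/-- The exceptional set `E(S)`: numbers `a = b·c` with `b, c ∈ S₁`, `a > max S₀`, and
whose set of divisors of `(max S₁)·a` strictly below `a` is exactly `S₁`. -/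
def excSet (S : Set ℕ) : Set ℕ :=
  {a | (∃ b ∈ odds S, ∃ c ∈ odds S, a = b * c) ∧ sSup (evens S) < a ∧
    {d | d ∣ sSup (odds S) * a ∧ d < a} = odds S}

/-- `P(S)`: the primes strictly greater than `max S₀`. -/
def primesAbove (S : Set ℕ) : Set ℕ := {p | p.Prime ∧ sSup (evens S) < p}

/-- A balanced spectrum is non-excessive if `S₁` is exactly the set of divisors of `max S₁`. -/
def nonExcessive (S : Set ℕ) : Prop := odds S = {d | d ∣ sSup (odds S)}

/-- `γ_p`: the largest `k` with `p^k ∈ S₁`. -/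
noncomputable def gammaIdx (S : Set ℕ) (p : ℕ) : ℕ := sSup {k | p ^ k ∈ odds S}

/-- `μ_p = v_p(max S₁)`. -/
noncomputable def muIdx (S : Set ℕ) (p : ℕ) : ℕ := (sSup (odds S)).factorization p

/-- The excessive index `ε_p = γ_p − μ_p` of a prime `p` with respect to `S`. -/
noncomputable def excIdx (S : Set ℕ) (p : ℕ) : ℕ := gammaIdx S p - muIdx S p

/-- The difference set `D(S)`: `S₁` with its `|S₀|` smallest elements removed when
`|S₀| ≤ |S₁|`, and empty otherwise.  An element `x` of `S₁` survives exactly when at least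
`|S₀|` elements of `S₁` lie strictly below it. -/
def diffSet (S : Set ℕ) : Set ℕ :=
  {x ∈ odds S | (evens S).encard ≤ {y ∈ odds S | y < x}.encard}

lemma sum_eq (l a : ℕ) : (∑ i ∈ Finset.range l, (a + i)) * 2 = l * (2 * a + (l - 1)) := by
  rw [Finset.sum_add_distrib, Finset.sum_const, Finset.card_range, smul_eq_mul, add_mul,
    Finset.sum_range_id_mul_two]
  ring_nf

lemma mem_lspec_iff {n l : ℕ} (hn : 0 < n) :
    l ∈ lspec n ↔ l ∣ 2 * n ∧ l * l < 2 * n ∧ Odd (l + 2 * n / l) := by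
  constructor
  · rintro ⟨hl, a, ha, hsum⟩
    have key : l * (2 * a + (l - 1)) = 2 * n := by
      rw [← sum_eq, hsum]; ring
    have hdvd : l ∣ 2 * n := ⟨_, key.symm⟩
    have hq : 2 * n / l = 2 * a + (l - 1) := by
      rw [← key, Nat.mul_div_cancel_left _ hl]
    refine ⟨hdvd, ?_, ?_⟩
    · calc l * l < l * (l + 1) := by nlinarith
        _ ≤ l * (2 * a + (l - 1)) := by
            apply Nat.mul_le_mul_left; omega
        _ = 2 * n := key
    · rw [hq]; exact ⟨a + l - 1, by omega⟩
  · rintro ⟨hdvd, hlt, hodd⟩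
    have hl : 0 < l := by
      rcases Nat.eq_zero_or_pos l with h | h
      · subst h; simp at hlt; omega
      · exact h
    set m := 2 * n / l with hm
    have hlm : l * m = 2 * n := Nat.mul_div_cancel' hdvd
    have hltm : l < m := by
      by_contra h
      push_neg at h
      have : l * m ≤ l * l := Nat.mul_le_mul_left _ h
      omega
    obtain ⟨c, hc⟩ := hodd
    refine ⟨hl, (m + 1 - l) / 2, by omega, ?_⟩
    have h2 : 2 * ((m + 1 - l) / 2) = m + 1 - l := by omega
    have : (∑ i ∈ Finset.range l, ((m + 1 - l) / 2 + i)) * 2 = l * m := by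
      rw [sum_eq]
      have : 2 * ((m + 1 - l) / 2) + (l - 1) = m := by omega
      rw [this]
    omega

lemma two_n (α k : ℕ) : 2 * (2 ^ α * k) = 2 ^ (α + 1) * k := by ring

lemma odd_of_dvd {k d : ℕ} (hodd : Odd k) (hd : d ∣ k) : Odd d := by
  rcases Nat.even_or_odd d with h | h
  · exfalso
    have : 2 ∣ k := dvd_trans h.two_dvd hd
    rw [Nat.odd_iff] at hodd; omega
  · exact h

lemma odds_lspec_eq (α k : ℕ) (hodd : Odd k) (hk0 : 0 < k) :
    odds (lspec (2 ^ α * k)) =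
      ↑(k.divisors.filter fun d => d * d < 2 ^ (α + 1) * k) := by
  have hn : 0 < 2 ^ α * k := by positivity
  ext x
  simp only [odds, Set.mem_setOf_eq, Finset.coe_filter, Nat.mem_divisors]
  rw [mem_lspec_iff hn, two_n α k]
  constructor
  · rintro ⟨⟨hdvd, hlt, _⟩, hx⟩
    have hcop : Nat.Coprime x (2 ^ (α + 1)) :=
      Nat.Coprime.pow_right _ (hx.coprime_two_right)
    have hxk : x ∣ k := hcop.dvd_of_dvd_mul_left hdvd
    exact ⟨⟨hxk, hk0.ne'⟩, hlt⟩
  · rintro ⟨⟨hdvd, _⟩, hlt⟩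
    have hx : Odd x := odd_of_dvd hodd hdvd
    refine ⟨⟨dvd_mul_of_dvd_right hdvd _, hlt, ?_⟩, hx⟩
    have hq : 2 ^ (α + 1) * k / x = 2 ^ (α + 1) * (k / x) := Nat.mul_div_assoc _ hdvd
    rw [hq]
    exact hx.add_even ⟨2 ^ α * (k / x), by ring⟩

lemma evens_lspec_eq (α k : ℕ) (hodd : Odd k) (hk0 : 0 < k) :
    evens (lspec (2 ^ α * k)) =
      ↑((k.divisors.filter fun e => 2 ^ (α + 1) * (e * e) < k).image
          fun e => 2 ^ (α + 1) * e) := by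
  have hn : 0 < 2 ^ α * k := by positivity
  have hcpos : 0 < 2 ^ (α + 1) := Nat.pow_pos (by norm_num)
  ext x
  simp only [evens, Set.mem_setOf_eq, Finset.coe_image, Set.mem_image, Finset.mem_coe,
    Finset.mem_filter, Nat.mem_divisors]
  rw [mem_lspec_iff hn, two_n α k]
  constructor
  · rintro ⟨⟨hdvd, hlt, hsum⟩, hx⟩
    have hxpos : 0 < x := by
      rcases Nat.eq_zero_or_pos x with h | h
      · subst h; exfalso; have := Nat.eq_zero_of_zero_dvd hdvd; nlinarith [Nat.one_le_two_pow (n := α + 1)]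
      · exact h
    set m := 2 ^ (α + 1) * k / x with hm
    have hxm : x * m = 2 ^ (α + 1) * k := Nat.mul_div_cancel' hdvd
    have hmodd : Odd m := by
      rcases Nat.even_or_odd m with h | h
      · exfalso
        have := hx.add h
        rw [Nat.odd_iff, Nat.even_iff] at *; omega
      · exact h
    have hcop : Nat.Coprime (2 ^ (α + 1)) m :=
      Nat.Coprime.pow_left _ (hmodd.coprime_two_left)
    have hdx : 2 ^ (α + 1) ∣ x := hcop.dvd_of_dvd_mul_right ⟨k, hxm⟩
    obtain ⟨e, he⟩ := hdx
    have hek : e ∣ k := by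
      have : 2 ^ (α + 1) * e ∣ 2 ^ (α + 1) * k := he ▸ hdvd
      exact (mul_dvd_mul_iff_left hcpos.ne').mp this
    refine ⟨e, ⟨⟨hek, hk0.ne'⟩, ?_⟩, he.symm⟩
    have : 2 ^ (α + 1) * (2 ^ (α + 1) * (e * e)) < 2 ^ (α + 1) * k := by
      calc 2 ^ (α + 1) * (2 ^ (α + 1) * (e * e)) = x * x := by rw [he]; ring
        _ < 2 ^ (α + 1) * k := hlt
    exact Nat.lt_of_mul_lt_mul_left this
  · rintro ⟨e, ⟨⟨hek, _⟩, hlt⟩, he⟩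
    subst he
    have hepos : 0 < e := Nat.pos_of_dvd_of_pos hek hk0
    have hq : 2 ^ (α + 1) * k / (2 ^ (α + 1) * e) = k / e :=
      Nat.mul_div_mul_left _ _ hcpos
    refine ⟨⟨mul_dvd_mul_left _ hek, ?_, ?_⟩, ⟨2 ^ α * e, by ring⟩⟩
    · calc 2 ^ (α + 1) * e * (2 ^ (α + 1) * e) = 2 ^ (α + 1) * (2 ^ (α + 1) * (e * e)) := by ring
        _ < 2 ^ (α + 1) * k := by exact (Nat.mul_lt_mul_left hcpos).mpr hlt
    · rw [hq]
      have : Odd (k / e) := odd_of_dvd hodd (Nat.div_dvd_of_dvd hek)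
      exact (Even.add_odd ⟨2 ^ α * e, by ring⟩ this)


lemma odd_of_dvd' {k d : ℕ} (hodd : Odd k) (hd : d ∣ k) : Odd d := by
  rcases Nat.even_or_odd d with h | h
  · exfalso
    have : 2 ∣ k := dvd_trans h.two_dvd hd
    rw [Nat.odd_iff] at hodd; omega
  · exact h

section
variable {c k : ℕ}

lemma par1 (hodd : Odd k) (hce : 2 ∣ c) {d : ℕ} (hd : d ∣ k) : d * d ≠ c * k := by
  have h1 : Odd (d * d) := (odd_of_dvd' hodd hd).mul (odd_of_dvd' hodd hd)
  have h2 : Even (c * k) := (even_iff_two_dvd.mpr hce).mul_right k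
  rw [Nat.odd_iff] at h1; rw [Nat.even_iff] at h2; omega

lemma par2 (hodd : Odd k) (hce : 2 ∣ c) {d : ℕ} : c * (d * d) ≠ k := by
  have h2 : Even (c * (d * d)) := (even_iff_two_dvd.mpr hce).mul_right _
  rw [Nat.odd_iff] at hodd; rw [Nat.even_iff] at h2; omega

lemma lem1 {d e : ℕ} (hed : d * e = k) (hk0 : 0 < k) (h : c * (e * e) < k) :
    c * k < d * d := by
  have hd0 : 0 < d := by
    rcases Nat.eq_zero_or_pos d with h' | h'
    · exfalso; rw [h', zero_mul] at hed; omega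
    · exact h'
  have h1 : (c * (e * e)) * (d * d) < k * (d * d) :=
    mul_lt_mul_of_pos_right h (by positivity)
  have h2 : (c * k) * k < (d * d) * k := by
    calc (c * k) * k = (c * (e * e)) * (d * d) := by rw [← hed]; ring
      _ < k * (d * d) := h1
      _ = (d * d) * k := mul_comm _ _
  exact Nat.lt_of_mul_lt_mul_right h2

lemma lem2 {d e : ℕ} (hed : d * e = k) (hk0 : 0 < k) (h : c * k ≤ d * d) :
    c * (e * e) ≤ k := by
  have h1 : (c * k) * (e * e) ≤ (d * d) * (e * e) :=
    Nat.mul_le_mul_right _ h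
  have h2 : (c * (e * e)) * k ≤ k * k := by
    calc (c * (e * e)) * k = (c * k) * (e * e) := by ring
      _ ≤ (d * d) * (e * e) := h1
      _ = k * k := by rw [← hed]; ring
  have := Nat.le_of_mul_le_mul_right h2 hk0
  exact this

lemma lem3 {d e : ℕ} (hed : d * e = k) (hk0 : 0 < k) (h : k < d * d) :
    e * e < k := by
  have h1 : (e * e) * (d * d) < k * (d * d) := by
    calc (e * e) * (d * d) = k * k := by rw [← hed]; ring
      _ < k * (d * d) := by exact mul_lt_mul_of_pos_left h hk0
      _ = k * (d * d) := rfl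
  exact Nat.lt_of_mul_lt_mul_right h1

lemma lem4 {m e : ℕ} (hme : m * e = k) (hk0 : 0 < k) (h : k ≤ c * (m * m)) :
    e * e ≤ c * k := by
  have h1 : (e * e) * k ≤ (c * k) * k := by
    calc (e * e) * k = k * (e * e) := mul_comm _ _
      _ ≤ (c * (m * m)) * (e * e) := Nat.mul_le_mul_right _ h
      _ = c * ((m * e) * (m * e)) := by ring
      _ = (c * k) * k := by rw [hme]; ring
  exact Nat.le_of_mul_le_mul_right h1 hk0

lemma div_pos_aux {d : ℕ} (hdk : d ∣ k) (hk0 : 0 < k) :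
    d * (k / d) = k ∧ 0 < d ∧ 0 < k / d := by
  have hed : d * (k / d) = k := Nat.mul_div_cancel' hdk
  have hd0 : 0 < d := Nat.pos_of_dvd_of_pos hdk hk0
  refine ⟨hed, hd0, ?_⟩
  rcases Nat.eq_zero_or_pos (k / d) with h | h
  · exfalso; rw [h, mul_zero] at hed; omega
  · exact h

lemma flipA (hodd : Odd k) (hce : 2 ∣ c) (hk0 : 0 < k) {e : ℕ} (he : e ∣ k) :
    c * (e * e) < k ↔ c * k < (k / e) * (k / e) := by
  obtain ⟨hed, he0, hd0⟩ := div_pos_aux he hk0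
  constructor
  · intro h
    exact lem1 (by rw [mul_comm]; exact hed) hk0 h
  · intro h
    have h2 : c * (e * e) ≤ k := lem2 (d := k / e) (by rw [mul_comm]; exact hed) hk0 h.le
    have h3 : c * (e * e) ≠ k := par2 hodd hce
    omega

lemma stepA (hodd : Odd k) (hce : 2 ∣ c) (hk0 : 0 < k) :
    (k.divisors.filter fun e => c * (e * e) < k).card
      = (k.divisors.filter fun d => ¬ d * d < c * k).card := by
  apply Finset.card_nbij' (fun e => k / e) (fun d => k / d)
  · intro e he
    simp only [Finset.mem_coe, Finset.mem_filter, Nat.mem_divisors] at he ⊢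
    obtain ⟨⟨hek, _⟩, hlt⟩ := he
    exact ⟨⟨Nat.div_dvd_of_dvd hek, hk0.ne'⟩, by
      have := (flipA hodd hce hk0 hek).mp hlt; omega⟩
  · intro d hd
    simp only [Finset.mem_coe, Finset.mem_filter, Nat.mem_divisors] at hd ⊢
    obtain ⟨⟨hdk, _⟩, hge⟩ := hd
    push_neg at hge
    have hne := par1 hodd hce hdk
    have hlt : c * k < d * d := by omega
    refine ⟨⟨Nat.div_dvd_of_dvd hdk, hk0.ne'⟩, ?_⟩
    rw [flipA hodd hce hk0 (Nat.div_dvd_of_dvd hdk), Nat.div_div_self hdk hk0.ne']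
    exact hlt
  · intro e he
    simp only [Finset.mem_coe, Finset.mem_filter, Nat.mem_divisors] at he
    exact Nat.div_div_self he.1.1 hk0.ne'
  · intro d hd
    simp only [Finset.mem_coe, Finset.mem_filter, Nat.mem_divisors] at hd
    exact Nat.div_div_self hd.1.1 hk0.ne'

lemma stepB (hodd : Odd k) (hce : 2 ∣ c) (hc2 : 2 ≤ c) (hk0 : 0 < k) :
    ((k.divisors.filter fun d => d * d < c * k).card
      = (k.divisors.filter fun d => ¬ d * d < c * k).card)
    ↔ ∀ m, m ∣ k → m * m ≤ k → c * (m * m) < k := by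
  have hkck : k < c * k := by
    calc k = 1 * k := (one_mul k).symm
      _ < c * k := by
          exact Nat.mul_lt_mul_of_lt_of_le (by omega) le_rfl hk0
  have hBA : ∀ d ∈ k.divisors.filter fun d => ¬ d * d < c * k,
      k / d ∈ k.divisors.filter fun d => d * d < c * k := by
    intro d hd
    simp only [Finset.mem_filter, Nat.mem_divisors] at hd ⊢
    obtain ⟨⟨hdk, _⟩, hge⟩ := hd
    push_neg at hge
    obtain ⟨hed, hd0, he0⟩ := div_pos_aux hdk hk0
    refine ⟨⟨Nat.div_dvd_of_dvd hdk, hk0.ne'⟩, ?_⟩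
    have h2 : c * ((k / d) * (k / d)) ≤ k := lem2 hed hk0 hge
    calc (k / d) * (k / d) ≤ c * ((k / d) * (k / d)) :=
          Nat.le_mul_of_pos_left _ (by omega)
      _ ≤ k := h2
      _ < c * k := hkck
  constructor
  · intro hcard
    by_contra hq
    push_neg at hq
    obtain ⟨m, hmk, hmle, hge⟩ := hq
    have hm0 : 0 < m := Nat.pos_of_dvd_of_pos hmk hk0
    have hmA : m ∈ k.divisors.filter fun d => d * d < c * k := by
      simp only [Finset.mem_filter, Nat.mem_divisors]
      exact ⟨⟨hmk, hk0.ne'⟩, lt_of_le_of_lt hmle hkck⟩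
    have hinj : ∀ d ∈ k.divisors.filter fun d => ¬ d * d < c * k,
        k / d ∈ (k.divisors.filter fun d => d * d < c * k).erase m := by
      intro d hd
      rw [Finset.mem_erase]
      refine ⟨?_, hBA d hd⟩
      intro heq
      simp only [Finset.mem_filter, Nat.mem_divisors] at hd
      obtain ⟨⟨hdk, _⟩, hge'⟩ := hd
      push_neg at hge'
      have hdm : d = k / m := by
        rw [← heq, Nat.div_div_self hdk hk0.ne']
      obtain ⟨hkm, _, _⟩ := div_pos_aux hmk hk0
      have h3 : (k / m) * (k / m) ≤ c * k := lem4 hkm hk0 hge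
      have hne := par1 hodd hce (Nat.div_dvd_of_dvd hmk)
      rw [hdm] at hge'
      omega
    have hle : (k.divisors.filter fun d => ¬ d * d < c * k).card
        ≤ ((k.divisors.filter fun d => d * d < c * k).erase m).card := by
      apply Finset.card_le_card_of_injOn (fun d => k / d) hinj
      intro d1 h1 d2 h2 heq
      simp only [Finset.coe_filter, Set.mem_setOf_eq, Nat.mem_divisors] at h1 h2
      have e1 : k / (k / d1) = d1 := Nat.div_div_self h1.1.1 hk0.ne'
      have e2 : k / (k / d2) = d2 := Nat.div_div_self h2.1.1 hk0.ne'
      simp only at heq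
      rw [← e1, ← e2, heq]
    have hlt := Finset.card_erase_lt_of_mem hmA
    omega
  · intro hq
    apply Finset.card_nbij' (fun d => k / d) (fun d => k / d)
    · intro d hd
      simp only [Finset.mem_coe, Finset.mem_filter, Nat.mem_divisors] at hd ⊢
      obtain ⟨⟨hdk, _⟩, hlt⟩ := hd
      refine ⟨⟨Nat.div_dvd_of_dvd hdk, hk0.ne'⟩, ?_⟩
      obtain ⟨hed, hd0, he0⟩ := div_pos_aux hdk hk0
      have hdle : d * d ≤ k := by
        by_contra hcon
        push_neg at hcon
        have hee : (k / d) * (k / d) < k := lem3 hed hk0 hcon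
        have h5 := hq (k / d) (Nat.div_dvd_of_dvd hdk) hee.le
        have h6 : c * k < d * d := lem1 hed hk0 h5
        omega
      have h7 := hq d hdk hdle
      have h8 : c * k < (k / d) * (k / d) :=
        lem1 (by rw [mul_comm]; exact hed) hk0 h7
      omega
    · exact hBA
    · intro d hd
      simp only [Finset.mem_coe, Finset.mem_filter, Nat.mem_divisors] at hd
      exact Nat.div_div_self hd.1.1 hk0.ne'
    · intro d hd
      simp only [Finset.mem_coe, Finset.mem_filter, Nat.mem_divisors] at hd
      exact Nat.div_div_self hd.1.1 hk0.ne'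

end


lemma qSet_eq (k : ℕ) (hk0 : 0 < k) :
    qSet k = ↑((k.divisors.filter fun m => m * m ≤ k).image
      fun m => ((k / m : ℕ) : ℚ) / (m : ℚ)) := by
  ext s
  simp only [qSet, Set.mem_setOf_eq, Finset.coe_image, Set.mem_image, Finset.mem_coe,
    Finset.mem_filter, Nat.mem_divisors]
  constructor
  · rintro ⟨m, m', hm0, hmle, hmm, rfl⟩
    have hdvd : m ∣ k := ⟨m', hmm.symm⟩
    have heq : k / m = m' := by
      rw [← hmm, Nat.mul_div_cancel_left _ hm0]
    exact ⟨m, ⟨⟨hdvd, hk0.ne'⟩, by calc m * m ≤ m * m' := Nat.mul_le_mul_left _ hmle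
      _ = k := hmm⟩, by rw [heq]⟩
  · rintro ⟨m, ⟨⟨hdvd, _⟩, hmle⟩, rfl⟩
    have hm0 : 0 < m := Nat.pos_of_dvd_of_pos hdvd hk0
    have hmm : m * (k / m) = k := Nat.mul_div_cancel' hdvd
    refine ⟨m, k / m, hm0, ?_, hmm, rfl⟩
    exact Nat.le_of_mul_le_mul_left (by omega) hm0

lemma qlemma (k c : ℕ) (hk0 : 0 < k) (hc0 : 0 < c) :
    (∃ r : ℚ, IsLeast (qSet k) r ∧ (c : ℚ) < r) ↔
      ∀ m, m ∣ k → m * m ≤ k → c * (m * m) < k := by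
  set F := k.divisors.filter fun m => m * m ≤ k with hF
  set G := F.image fun m => ((k / m : ℕ) : ℚ) / (m : ℚ) with hG
  have hFne : F.Nonempty := ⟨1, by
    simp only [hF, Finset.mem_filter, Nat.mem_divisors]
    exact ⟨⟨one_dvd _, hk0.ne'⟩, by omega⟩⟩
  have hGne : G.Nonempty := hFne.image _
  have hqeq := qSet_eq k hk0
  constructor
  · rintro ⟨r, ⟨hmem, hlb⟩, hcr⟩
    intro m hmk hmle
    have hm0 : 0 < m := Nat.pos_of_dvd_of_pos hmk hk0
    have hs : ((k / m : ℕ) : ℚ) / (m : ℚ) ∈ qSet k := by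
      rw [hqeq]
      refine Finset.mem_coe.mpr (Finset.mem_image.mpr ⟨m, ?_, rfl⟩)
      simp only [Finset.mem_filter, Nat.mem_divisors]
      exact ⟨⟨hmk, hk0.ne'⟩, hmle⟩
    have hrs : (c : ℚ) < ((k / m : ℕ) : ℚ) / (m : ℚ) := lt_of_lt_of_le hcr (hlb hs)
    rw [lt_div_iff₀ (by exact_mod_cast hm0)] at hrs
    have hnat : c * m < k / m := by exact_mod_cast hrs
    have hmm : m * (k / m) = k := Nat.mul_div_cancel' hmk
    calc c * (m * m) = m * (c * m) := by ring
      _ < m * (k / m) := by exact Nat.mul_lt_mul_of_le_of_lt le_rfl hnat hm0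
      _ = k := hmm
  · intro hq
    refine ⟨G.min' hGne, ⟨?_, ?_⟩, ?_⟩
    · rw [hqeq]; exact_mod_cast G.min'_mem hGne
    · intro s hs
      rw [hqeq] at hs
      exact G.min'_le s (by exact_mod_cast hs)
    · obtain ⟨m, hmF, hmeq⟩ := Finset.mem_image.mp (G.min'_mem hGne)
      simp only [hF, Finset.mem_filter, Nat.mem_divisors] at hmF
      obtain ⟨⟨hmk, _⟩, hmle⟩ := hmF
      have hm0 : 0 < m := Nat.pos_of_dvd_of_pos hmk hk0
      have hmm : m * (k / m) = k := Nat.mul_div_cancel' hmk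
      have h1 : c * (m * m) < k := hq m hmk hmle
      have h2 : m * (c * m) < m * (k / m) := by
        calc m * (c * m) = c * (m * m) := by ring
          _ < k := h1
          _ = m * (k / m) := hmm.symm
      have h3 : c * m < k / m := Nat.lt_of_mul_lt_mul_left h2
      rw [← hmeq, lt_div_iff₀ (by exact_mod_cast hm0)]
      exact_mod_cast h3


lemma main_balanced (α k : ℕ) (hodd : Odd k) (hk0 : 0 < k) :
    balancedSet (lspec (2 ^ α * k)) ↔
      ∀ m, m ∣ k → m * m ≤ k → 2 ^ (α + 1) * (m * m) < k := by
  have hce : 2 ∣ 2 ^ (α + 1) := dvd_pow_self 2 (Nat.succ_ne_zero α)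
  have hc2 : 2 ≤ 2 ^ (α + 1) := Nat.le_self_pow (Nat.succ_ne_zero α) 2 |>.trans_eq rfl
  unfold balancedSet
  rw [evens_lspec_eq α k hodd hk0, odds_lspec_eq α k hodd hk0,
    Set.encard_coe_eq_coe_finsetCard, Set.encard_coe_eq_coe_finsetCard, Nat.cast_inj,
    Finset.card_image_of_injective _
      (mul_right_injective₀ (show (2 ^ (α + 1) : ℕ) ≠ 0 by positivity)),
    stepA hodd hce hk0, eq_comm]
  exact stepB hodd hce hc2 hk0

/-- `lspec n` is balanced iff `n = 2^α · k` with `k` odd and `q(k) > 2^(α+1)`. -/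
theorem balanced_iff (n : ℕ) (hn : 0 < n) :
    balancedSet (lspec n) ↔
      ∃ α k : ℕ, Odd k ∧ 0 < k ∧ n = 2 ^ α * k ∧
        ∃ r : ℚ, IsLeast (qSet k) r ∧ (2 : ℚ) ^ (α + 1) < r := by
  have hcast : ∀ α : ℕ, ((2 ^ (α + 1) : ℕ) : ℚ) = (2 : ℚ) ^ (α + 1) := by
    intro α; push_cast; ring
  constructor
  · intro hb
    set α := n.factorization 2 with hα
    set k := n / 2 ^ α with hk
    have hfac : 2 ^ α * k = n := Nat.ordProj_mul_ordCompl_eq_self n 2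
    have h2 : ¬ 2 ∣ k := Nat.not_dvd_ordCompl Nat.prime_two hn.ne'
    have hkodd : Odd k := Nat.odd_iff.mpr (by omega)
    have hk0 : 0 < k := Nat.ordCompl_pos 2 hn.ne'
    refine ⟨α, k, hkodd, hk0, hfac.symm, ?_⟩
    have hq := (main_balanced α k hkodd hk0).mp (by rwa [hfac])
    obtain ⟨r, hl, hr⟩ :=
      (qlemma k (2 ^ (α + 1)) hk0 (by positivity)).mpr hq
    exact ⟨r, hl, by rw [← hcast α]; exact hr⟩
  · rintro ⟨α, k, hkodd, hk0, rfl, r, hleast, hr⟩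
    apply (main_balanced α k hkodd hk0).mpr
    apply (qlemma k (2 ^ (α + 1)) hk0 (by positivity)).mp
    exact ⟨r, hleast, by rw [hcast α]; exact hr⟩
end

section
/- Let n be a positive integer such that lspec(n) is lopsided. Then L(n) = {n}; that is, n is the unique positive integer whose length spectrum equals lspec(n). -/
/-!
Write `2 n = 2 ^ e * N` with `N` odd (so `e ≠ 0`). A decomposition of length `l` corresponds to a
factorization `2 n = l * k` with `l < k` of opposite parities, hence to a factorization `N = x * y`
giving the odd length `x` when `x < 2 ^ e * y` and the even length `2 ^ e * x` when `2 ^ e * x < y`.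
So `2 ^ e` is the least even length, and the odd lengths `x` for which `2 ^ e * x` is not a length
are the divisors `x` of `N` with `x < 2 ^ e * y` and `y < 2 ^ e * x`. This set is closed under
`x ↦ N / x`, and it is nonempty unless the spectrum is balanced; then `N` is the product of its
largest and smallest elements. Both `e` and `N` are thus read off the spectrum.
-/

open Finset

lemma two_mul_sum_range_add_succ (l a : ℕ) :
    2 * ∑ i ∈ range l, (a + 1 + i) = l * (2 * a + l + 1) := by
  induction l with
  | zero => simp
  | succ l ih => rw [sum_range_succ, mul_add, ih]; ring

lemma mem_lspec_iff_exists_mul {n l : ℕ} :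
    l ∈ lspec n ↔ 0 < l ∧ ∃ k, l < k ∧ Odd (l + k) ∧ l * k = 2 * n := by
  constructor
  · rintro ⟨hl, a, ha, hsum⟩
    obtain ⟨a, rfl⟩ := Nat.exists_eq_add_one_of_ne_zero ha.ne'
    exact ⟨hl, 2 * a + l + 1, by omega, ⟨l + a, by ring⟩,
      by rw [← hsum, two_mul_sum_range_add_succ]⟩
  · rintro ⟨hl, k, hlk, ⟨t, ht⟩, hk⟩
    refine ⟨hl, t - l + 1, Nat.succ_pos _, ?_⟩
    have hsum := two_mul_sum_range_add_succ l (t - l)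
    rw [show 2 * (t - l) + l + 1 = k by omega, hk] at hsum
    omega

lemma exists_mul_eq_of_odd_of_mul_eq {e N l k : ℕ} (hl : Odd l) (h : l * k = 2 ^ e * N) :
    ∃ y, l * y = N ∧ k = 2 ^ e * y := by
  obtain ⟨y, rfl⟩ : l ∣ N :=
    (Nat.Coprime.pow_right e (Nat.coprime_two_right.mpr hl)).dvd_of_dvd_mul_left ⟨k, h.symm⟩
  refine ⟨y, rfl, Nat.eq_of_mul_eq_mul_left hl.pos ?_⟩
  rw [h]; ring

lemma odd_add_and_mul_eq_two_pow_mul_iff {e N l k : ℕ} (he : e ≠ 0) (hN : Odd N) :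
    Odd (l + k) ∧ l * k = 2 ^ e * N ↔
      ∃ x y, x * y = N ∧ (l = x ∧ k = 2 ^ e * y ∨ l = 2 ^ e * x ∧ k = y) := by
  have hpow := (Nat.even_pow' he).mpr even_two
  constructor
  · rintro ⟨hodd, h⟩
    by_cases hl : Odd l
    · obtain ⟨y, hy, rfl⟩ := exists_mul_eq_of_odd_of_mul_eq hl h
      exact ⟨l, y, hy, Or.inl ⟨rfl, rfl⟩⟩
    · have hk : Odd k := Nat.not_even_iff_odd.mp fun hk => hl (Nat.odd_add.mp hodd |>.mpr hk)
      obtain ⟨x, hx, rfl⟩ := exists_mul_eq_of_odd_of_mul_eq hk (by rw [mul_comm, h])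
      exact ⟨x, k, by rw [mul_comm, hx], Or.inr ⟨rfl, rfl⟩⟩
  · rintro ⟨x, y, rfl, ⟨rfl, rfl⟩ | ⟨rfl, rfl⟩⟩
    · exact ⟨(Nat.odd_mul.mp hN).1.add_even (hpow.mul_right y), by ring⟩
    · exact ⟨(hpow.mul_right x).add_odd (Nat.odd_mul.mp hN).2, by ring⟩

lemma sSup_mul_sInf_of_exists_mul_eq {X : Set ℕ} {N : ℕ} (hN : 0 < N) (hne : X.Nonempty)
    (hmul : ∀ x ∈ X, ∃ y ∈ X, x * y = N) : sSup X * sInf X = N := by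
  have hbdd : BddAbove X := ⟨N, fun x hx => by
    obtain ⟨y, -, hxy⟩ := hmul x hx
    exact Nat.le_of_dvd hN ⟨y, hxy.symm⟩⟩
  obtain ⟨b, hb, hab⟩ := hmul _ (Nat.sSup_mem hne hbdd)
  obtain ⟨d, hd, hcd⟩ := hmul _ (Nat.sInf_mem hne)
  apply le_antisymm
  · calc sSup X * sInf X ≤ sSup X * b := Nat.mul_le_mul_left _ (Nat.sInf_le hb)
      _ = N := hab
  · calc N = sInf X * d := hcd.symm
      _ ≤ sInf X * sSup X := Nat.mul_le_mul_left _ (le_csSup hbdd hd)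
      _ = sSup X * sInf X := mul_comm _ _

section OddPart

variable {n e N : ℕ}

lemma ne_zero_of_two_mul_eq_two_pow_mul (hsplit : 2 * n = 2 ^ e * N) (hN : Odd N) : e ≠ 0 := by
  rintro rfl
  exact Nat.not_even_iff_odd.mpr hN ⟨n, by omega⟩

lemma mem_lspec_iff_s9 (hsplit : 2 * n = 2 ^ e * N) (hN : Odd N) {l : ℕ} :
    l ∈ lspec n ↔
      ∃ x y, x * y = N ∧ (l = x ∧ x < 2 ^ e * y ∨ l = 2 ^ e * x ∧ 2 ^ e * x < y) := by
  have he := ne_zero_of_two_mul_eq_two_pow_mul hsplit hN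
  rw [mem_lspec_iff_exists_mul, hsplit]
  constructor
  · rintro ⟨-, k, hlk, hk⟩
    obtain ⟨x, y, hxy, ⟨rfl, rfl⟩ | ⟨rfl, rfl⟩⟩ :=
      (odd_add_and_mul_eq_two_pow_mul_iff he hN).mp hk
    exacts [⟨_, y, hxy, Or.inl ⟨rfl, hlk⟩⟩, ⟨x, _, hxy, Or.inr ⟨rfl, hlk⟩⟩]
  · rintro ⟨x, y, hxy, ⟨rfl, hlt⟩ | ⟨rfl, hlt⟩⟩
    · exact ⟨(Nat.odd_mul.mp (hxy ▸ hN)).1.pos, _, hlt,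
        (odd_add_and_mul_eq_two_pow_mul_iff he hN).mpr ⟨_, y, hxy, Or.inl ⟨rfl, rfl⟩⟩⟩
    · exact ⟨Nat.mul_pos (by positivity) (Nat.odd_mul.mp (hxy ▸ hN)).1.pos, _, hlt,
        (odd_add_and_mul_eq_two_pow_mul_iff he hN).mpr ⟨x, y, hxy, Or.inr ⟨rfl, rfl⟩⟩⟩

lemma mem_odds_lspec_iff (hsplit : 2 * n = 2 ^ e * N) (hN : Odd N) {x : ℕ} :
    x ∈ odds (lspec n) ↔ ∃ y, x * y = N ∧ x < 2 ^ e * y := by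
  have hpow := (Nat.even_pow' (ne_zero_of_two_mul_eq_two_pow_mul hsplit hN)).mpr even_two
  constructor
  · rintro ⟨hx, hodd⟩
    obtain ⟨x', y, hxy, ⟨rfl, hlt⟩ | ⟨rfl, -⟩⟩ := (mem_lspec_iff_s9 hsplit hN).mp hx
    · exact ⟨y, hxy, hlt⟩
    · exact absurd (hpow.mul_right x') (Nat.not_even_iff_odd.mpr hodd)
  · rintro ⟨y, hxy, hlt⟩
    exact ⟨(mem_lspec_iff_s9 hsplit hN).mpr ⟨x, y, hxy, Or.inl ⟨rfl, hlt⟩⟩,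
      (Nat.odd_mul.mp (hxy ▸ hN)).1⟩

lemma two_pow_mul_mem_lspec_iff (hsplit : 2 * n = 2 ^ e * N) (hN : Odd N) {x : ℕ} :
    2 ^ e * x ∈ lspec n ↔ ∃ y, x * y = N ∧ 2 ^ e * x < y := by
  have hpow := (Nat.even_pow' (ne_zero_of_two_mul_eq_two_pow_mul hsplit hN)).mpr even_two
  constructor
  · intro hx
    obtain ⟨x', y, hxy, ⟨heq, -⟩ | ⟨heq, hlt⟩⟩ := (mem_lspec_iff_s9 hsplit hN).mp hx
    · exact absurd (heq ▸ hpow.mul_right x)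
        (Nat.not_even_iff_odd.mpr (Nat.odd_mul.mp (hxy ▸ hN)).1)
    · obtain rfl := Nat.eq_of_mul_eq_mul_left (by positivity) heq
      exact ⟨y, hxy, hlt⟩
  · rintro ⟨y, hxy, hlt⟩
    exact (mem_lspec_iff_s9 hsplit hN).mpr ⟨x, y, hxy, Or.inr ⟨rfl, hlt⟩⟩

lemma evens_lspec_eq_image (hsplit : 2 * n = 2 ^ e * N) (hN : Odd N) :
    evens (lspec n) = (2 ^ e * ·) '' {x | 2 ^ e * x ∈ lspec n} := by
  have hpow := (Nat.even_pow' (ne_zero_of_two_mul_eq_two_pow_mul hsplit hN)).mpr even_two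
  ext l
  constructor
  · rintro ⟨hl, hev⟩
    obtain ⟨x, y, hxy, ⟨rfl, -⟩ | ⟨rfl, -⟩⟩ := (mem_lspec_iff_s9 hsplit hN).mp hl
    · exact absurd hev (Nat.not_even_iff_odd.mpr (Nat.odd_mul.mp (hxy ▸ hN)).1)
    · exact ⟨x, hl, rfl⟩
  · rintro ⟨x, hx, rfl⟩
    exact ⟨hx, hpow.mul_right x⟩

lemma isLeast_evens_lspec (hsplit : 2 * n = 2 ^ e * N) (hN : Odd N)
    (hne : (evens (lspec n)).Nonempty) : IsLeast (evens (lspec n)) (2 ^ e) := by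
  rw [evens_lspec_eq_image hsplit hN] at hne ⊢
  obtain ⟨-, ⟨x, hx, rfl⟩⟩ := hne
  obtain ⟨y, hxy, hlt⟩ := (two_pow_mul_mem_lspec_iff hsplit hN).mp hx
  have hx0 : 0 < x := (Nat.odd_mul.mp (hxy ▸ hN)).1.pos
  have hyN : y ≤ N := Nat.le_of_dvd hN.pos ⟨x, by rw [← hxy, mul_comm]⟩
  refine ⟨⟨1, (two_pow_mul_mem_lspec_iff hsplit hN).mpr ⟨N, one_mul N, ?_⟩, mul_one _⟩,
    ?_⟩
  · calc 2 ^ e * 1 ≤ 2 ^ e * x := Nat.mul_le_mul_left _ hx0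
      _ < y := hlt
      _ ≤ N := hyN
  · rintro _ ⟨z, hz, rfl⟩
    obtain ⟨w, hzw, -⟩ := (two_pow_mul_mem_lspec_iff hsplit hN).mp hz
    exact Nat.le_mul_of_pos_right _ (Nat.odd_mul.mp (hzw ▸ hN)).1.pos

def unpaired (S : Set ℕ) (e : ℕ) : Set ℕ := {x ∈ odds S | 2 ^ e * x ∉ S}

lemma mem_unpaired_lspec_iff (hsplit : 2 * n = 2 ^ e * N) (hN : Odd N) {x : ℕ} :
    x ∈ unpaired (lspec n) e ↔ ∃ y, x * y = N ∧ x < 2 ^ e * y ∧ y < 2 ^ e * x := by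
  have hpow := (Nat.even_pow' (ne_zero_of_two_mul_eq_two_pow_mul hsplit hN)).mpr even_two
  simp only [unpaired, Set.mem_ofPred_eq, mem_odds_lspec_iff hsplit hN,
    two_pow_mul_mem_lspec_iff hsplit hN, not_exists, not_and, not_lt]
  constructor
  · rintro ⟨⟨y, hxy, hlt⟩, hnot⟩
    have hne : y ≠ 2 ^ e * x := fun h =>
      Nat.not_even_iff_odd.mpr (Nat.odd_mul.mp (hxy ▸ hN)).2 (h ▸ hpow.mul_right x)
    exact ⟨y, hxy, hlt, (hnot y hxy).lt_of_ne hne⟩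
  · rintro ⟨y, hxy, hlt, hgt⟩
    refine ⟨⟨y, hxy, hlt⟩, fun y' hxy' => ?_⟩
    obtain rfl : y' = y :=
      Nat.eq_of_mul_eq_mul_left (Nat.odd_mul.mp (hxy ▸ hN)).1.pos (hxy'.trans hxy.symm)
    exact hgt.le

lemma unpaired_lspec_nonempty (hsplit : 2 * n = 2 ^ e * N) (hN : Odd N)
    (hbal : ¬ balancedSet (lspec n)) : (unpaired (lspec n) e).Nonempty := by
  rw [Set.nonempty_iff_ne_empty]
  intro hempty
  have hodds : {x | 2 ^ e * x ∈ lspec n} = odds (lspec n) := by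
    ext x
    simp only [Set.mem_ofPred_eq, two_pow_mul_mem_lspec_iff hsplit hN, mem_odds_lspec_iff hsplit hN]
    constructor
    · rintro ⟨y, hxy, hlt⟩
      exact ⟨y, hxy, (Nat.le_mul_of_pos_left x (by positivity)).trans_lt
        (hlt.trans_le (Nat.le_mul_of_pos_left y (by positivity)))⟩
    · intro hx
      by_contra hnot
      exact hempty.subset ⟨(mem_odds_lspec_iff hsplit hN).mpr hx,
        fun h => hnot ((two_pow_mul_mem_lspec_iff hsplit hN).mp h)⟩
  apply hbal
  rw [balancedSet, evens_lspec_eq_image hsplit hN, hodds,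
    (mul_right_injective₀ (by positivity)).encard_image]

lemma sSup_mul_sInf_unpaired_lspec (hsplit : 2 * n = 2 ^ e * N) (hN : Odd N)
    (hne : (unpaired (lspec n) e).Nonempty) :
    sSup (unpaired (lspec n) e) * sInf (unpaired (lspec n) e) = N := by
  refine sSup_mul_sInf_of_exists_mul_eq hN.pos hne fun x hx => ?_
  obtain ⟨y, hxy, hlt, hgt⟩ := (mem_unpaired_lspec_iff hsplit hN).mp hx
  exact ⟨y, (mem_unpaired_lspec_iff hsplit hN).mpr ⟨x, by rw [mul_comm, hxy], hgt, hlt⟩,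
    hxy⟩

end OddPart

/-- If `lspec n` is lopsided then the spectral class of `n` is `{n}`. -/
theorem specClass_of_lopsided (n : ℕ) (hn : 0 < n) (h : lopsidedSet (lspec n)) :
    specClass n = {n} := by
  refine Set.eq_singleton_iff_unique_mem.mpr ⟨⟨hn, rfl⟩, ?_⟩
  rintro m ⟨hm, hspec⟩
  obtain ⟨e, N, hN, hsplit⟩ := Nat.exists_eq_two_pow_mul_odd (by omega : 2 * n ≠ 0)
  obtain ⟨f, M, hM, hsplit'⟩ := Nat.exists_eq_two_pow_mul_odd (by omega : 2 * m ≠ 0)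
  have hevens : (evens (lspec n)).Nonempty := Set.nonempty_iff_ne_empty.mpr h.2
  obtain rfl : e = f := Nat.pow_right_injective le_rfl <|
    (hspec ▸ isLeast_evens_lspec hsplit hN hevens).unique
      (isLeast_evens_lspec hsplit' hM (hspec ▸ hevens))
  have hX := unpaired_lspec_nonempty hsplit hN h.1
  obtain rfl : M = N := by
    rw [← sSup_mul_sInf_unpaired_lspec hsplit hN hX,
      ← sSup_mul_sInf_unpaired_lspec hsplit' hM (hspec ▸ hX), hspec]
  omega
end
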